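/- For every finite knowledge graph G there is, up to isomorphism, a unique knowledge graph H such that (1) H is a relation-preserving core, and (2) there exist relation-preserving homomorphisms from G to H and from H to G. (Uniqueness part: if H1 and H2 both satisfy (1) and (2) with respect to G, then H1 and H2 are isomorphic as knowledge graphs.) -/

import Mathlib

structure KG (N Rel : Type*) where
  V : Set N
  R : Set Rel
  E : Set (N × Rel × N)
  wf : ∀ e ∈ E, e.1 ∈ V ∧ e.2.1 ∈ R ∧ e.2.2 ∈ V

/-- A (node-relation) homomorphism from `G` to `G'`, given by maps `π` on nodes and
`φ` on relations: it maps nodes of `G` to nodes of `G'`, relations to relations,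
and every fact `r(u,v)` of `G` to the fact `φ(r)(π(u),π(v))` of `G'`. -/
def IsHom {N₁ R₁ N₂ R₂ : Type*} (G : KG N₁ R₁) (G' : KG N₂ R₂)
    (π : N₁ → N₂) (φ : R₁ → R₂) : Prop :=
  (∀ v ∈ G.V, π v ∈ G'.V) ∧ (∀ r ∈ G.R, φ r ∈ G'.R) ∧
    ∀ u r v, (u, r, v) ∈ G.E → (π u, φ r, π v) ∈ G'.E

/-- A relation-preserving homomorphism: a homomorphism with `R ⊆ R'` and `φ(R) = R`. -/
def IsRelPresHom {N₁ N₂ Rel : Type*} (G : KG N₁ Rel) (G' : KG N₂ Rel)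
    (π : N₁ → N₂) (φ : Rel → Rel) : Prop :=
  IsHom G G' π φ ∧ G.R ⊆ G'.R ∧ φ '' G.R = G.R

/-- The image `h(G)` of a knowledge graph under a homomorphism `(π, φ)`. -/
def kgImage {N₁ R₁ N₂ R₂ : Type*} (G : KG N₁ R₁) (π : N₁ → N₂) (φ : R₁ → R₂) :
    KG N₂ R₂ where
  V := π '' G.V
  R := φ '' G.R
  E := (fun e => (π e.1, φ e.2.1, π e.2.2)) '' G.E
  wf := by
    rintro e ⟨⟨u, r, v⟩, he, rfl⟩
    obtain ⟨h1, h2, h3⟩ := G.wf _ he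
    exact ⟨⟨u, h1, rfl⟩, ⟨r, h2, rfl⟩, ⟨v, h3, rfl⟩⟩

/-- `H` is a relation-preserving core: every relation-preserving homomorphism
from `H` to itself is onto, i.e. its image is all of `H`. -/
def IsRPCore {N Rel : Type*} (H : KG N Rel) : Prop :=
  ∀ (π : N → N) (φ : Rel → Rel), IsRelPresHom H H π φ → kgImage H π φ = H

/-- Isomorphism of knowledge graphs: a pair of bijections between the node sets and
the relation sets preserving facts in both directions. -/
def IsIso {N₁ R₁ N₂ R₂ : Type*} (G : KG N₁ R₁) (G' : KG N₂ R₂) : Prop :=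
  ∃ (π : N₁ → N₂) (φ : R₁ → R₂),
    Set.BijOn π G.V G'.V ∧ Set.BijOn φ G.R G'.R ∧
    ∀ u r v, u ∈ G.V → r ∈ G.R → v ∈ G.V →
      ((u, r, v) ∈ G.E ↔ (π u, φ r, π v) ∈ G'.E)

/-!
Composing the given homomorphisms through `G` yields relation-preserving maps `f : H₁ → H₂`
and `g : H₂ → H₁`, and `Hᵢ` is finite because the core property makes it the image of `G`.
By the core property `g ∘ f` and `f ∘ g` are onto, and an onto self-map of a finite knowledge
graph is an automorphism: it is injective on nodes and relations, so it also reflects facts.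
Hence `f` is bijective, and it reflects facts because `g ∘ f` does.
-/

def IsIsoVia {N₁ R₁ N₂ R₂ : Type*} (G : KG N₁ R₁) (G' : KG N₂ R₂)
    (π : N₁ → N₂) (φ : R₁ → R₂) : Prop :=
  Set.BijOn π G.V G'.V ∧ Set.BijOn φ G.R G'.R ∧
    ∀ u r v, u ∈ G.V → r ∈ G.R → v ∈ G.V →
      ((u, r, v) ∈ G.E ↔ (π u, φ r, π v) ∈ G'.E)

theorem IsHom.comp {N₁ R₁ N₂ R₂ N₃ R₃ : Type*} {G₁ : KG N₁ R₁} {G₂ : KG N₂ R₂}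
    {G₃ : KG N₃ R₃} {π : N₁ → N₂} {φ : R₁ → R₂} {π' : N₂ → N₃} {φ' : R₂ → R₃}
    (h' : IsHom G₂ G₃ π' φ') (h : IsHom G₁ G₂ π φ) :
    IsHom G₁ G₃ (π' ∘ π) (φ' ∘ φ) :=
  ⟨fun v hv => h'.1 _ (h.1 v hv), fun r hr => h'.2.1 _ (h.2.1 r hr),
    fun u r v he => h'.2.2 _ _ _ (h.2.2 u r v he)⟩

namespace IsRelPresHom

variable {N₁ N₂ N₃ Rel : Type*} {G₁ : KG N₁ Rel} {G₂ : KG N₂ Rel} {G₃ : KG N₃ Rel}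
  {π : N₁ → N₂} {φ φ' : Rel → Rel}

theorem R_eq {π' : N₂ → N₁} (h : IsRelPresHom G₁ G₂ π φ) (h' : IsRelPresHom G₂ G₁ π' φ') : G₁.R = G₂.R :=
  h.2.1.antisymm h'.2.1

theorem comp {π' : N₂ → N₃} (h' : IsRelPresHom G₂ G₃ π' φ') (h : IsRelPresHom G₁ G₂ π φ)
    (hR : G₂.R = G₁.R) : IsRelPresHom G₁ G₃ (π' ∘ π) (φ' ∘ φ) :=
  ⟨h'.1.comp h.1, h.2.1.trans h'.2.1, by rw [Set.image_comp, h.2.2, ← hR, h'.2.2]⟩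

end IsRelPresHom

theorem IsIsoVia.of_kgImage_eq {N Rel : Type*} {H : KG N Rel} {π : N → N} {φ : Rel → Rel}
    (hV : H.V.Finite) (hR : H.R.Finite) (hπ : IsHom H H π φ) (himage : kgImage H π φ = H) :
    IsIsoVia H H π φ := by
  have onto_V : π '' H.V = H.V := congrArg KG.V himage
  have onto_R : φ '' H.R = H.R := congrArg KG.R himage
  have onto_E : (fun e => (π e.1, φ e.2.1, π e.2.2)) '' H.E = H.E := congrArg KG.E himage
  have bij_V : Set.BijOn π H.V H.V := (hV.surjOn_iff_bijOn_of_mapsTo hπ.1).1 onto_V.ge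
  have bij_R : Set.BijOn φ H.R H.R := (hR.surjOn_iff_bijOn_of_mapsTo hπ.2.1).1 onto_R.ge
  refine ⟨bij_V, bij_R, fun u r v hu hr hv => ⟨hπ.2.2 u r v, fun he => ?_⟩⟩
  rw [← onto_E] at he
  obtain ⟨⟨u', r', v'⟩, he', heq⟩ := he
  obtain ⟨hu', hr', hv'⟩ := H.wf _ he'
  simp only [Prod.mk.injEq] at heq
  obtain ⟨eq_u, eq_r, eq_v⟩ := heq
  obtain rfl : u' = u := bij_V.injOn hu' hu eq_u
  obtain rfl : r' = r := bij_R.injOn hr' hr eq_r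
  obtain rfl : v' = v := bij_V.injOn hv' hv eq_v
  exact he'

theorem IsIsoVia.of_comp {N₁ R₁ N₂ R₂ : Type*} {H₁ : KG N₁ R₁} {H₂ : KG N₂ R₂}
    {f : N₁ → N₂} {φ : R₁ → R₂} {g : N₂ → N₁} {ψ : R₂ → R₁}
    (hf : IsHom H₁ H₂ f φ) (hg : IsHom H₂ H₁ g ψ)
    (hgf : IsIsoVia H₁ H₁ (g ∘ f) (ψ ∘ φ)) (hfg : IsIsoVia H₂ H₂ (f ∘ g) (φ ∘ ψ)) :
    IsIsoVia H₁ H₂ f φ :=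
  ⟨⟨hf.1, hgf.1.injOn.of_comp, hfg.1.surjOn.of_comp hg.1⟩,
    ⟨hf.2.1, hgf.2.1.injOn.of_comp, hfg.2.1.surjOn.of_comp hg.2.1⟩,
    fun u r v hu hr hv => ⟨hf.2.2 u r v, fun he => (hgf.2.2 u r v hu hr hv).2 (hg.2.2 _ _ _ he)⟩⟩

theorem IsRPCore.V_finite {N₁ N₂ Rel : Type*} {G : KG N₁ Rel} {H : KG N₂ Rel}
    {a : N₁ → N₂} {α : Rel → Rel} {b : N₂ → N₁} {β : Rel → Rel} (hH : IsRPCore H)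
    (ha : IsRelPresHom G H a α) (hb : IsRelPresHom H G b β) (hG : G.V.Finite) :
    H.V.Finite := by
  have onto_V : (a ∘ b) '' H.V = H.V := congrArg KG.V (hH _ _ (ha.comp hb (ha.R_eq hb)))
  refine (hG.image a).subset ?_
  rw [← onto_V, Set.image_comp]
  exact Set.image_mono (Set.MapsTo.image_subset hb.1.1)

theorem rpCore_unique_general {N Rel : Type*} (G H₁ H₂ : KG N Rel)
    (hGV : G.V.Finite) (hGR : G.R.Finite)
    (h1core : IsRPCore H₁) (h2core : IsRPCore H₂)
    (hGtoH1 : ∃ π φ, IsRelPresHom G H₁ π φ)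
    (hH1toG : ∃ π φ, IsRelPresHom H₁ G π φ)
    (hGtoH2 : ∃ π φ, IsRelPresHom G H₂ π φ)
    (hH2toG : ∃ π φ, IsRelPresHom H₂ G π φ) :
    IsIso H₁ H₂ := by
  obtain ⟨a, α, ha⟩ := hGtoH1
  obtain ⟨b, β, hb⟩ := hH1toG
  obtain ⟨c, γ, hc⟩ := hGtoH2
  obtain ⟨d, δ, hd⟩ := hH2toG
  have hR₁ : G.R = H₁.R := ha.R_eq hb
  have hR₂ : G.R = H₂.R := hc.R_eq hd
  have hf : IsRelPresHom H₁ H₂ (c ∘ b) (γ ∘ β) := hc.comp hb hR₁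
  have hg : IsRelPresHom H₂ H₁ (a ∘ d) (α ∘ δ) := ha.comp hd hR₂
  have aut₁ := IsIsoVia.of_kgImage_eq (h1core.V_finite ha hb hGV) (hR₁ ▸ hGR) (hg.1.comp hf.1)
    (h1core _ _ (hg.comp hf (hR₂.symm.trans hR₁)))
  have aut₂ := IsIsoVia.of_kgImage_eq (h2core.V_finite hc hd hGV) (hR₂ ▸ hGR) (hf.1.comp hg.1)
    (h2core _ _ (hf.comp hg (hR₁.symm.trans hR₂)))
  exact ⟨_, _, IsIsoVia.of_comp hf.1 hg.1 aut₁ aut₂⟩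

/-- Uniqueness of the relation-preserving core: if `H₁` and `H₂` are both
relation-preserving cores admitting relation-preserving homomorphisms to and
from the finite knowledge graph `G`, then `H₁` and `H₂` are isomorphic. -/
theorem rpCore_unique {N Rel : Type*} (G H₁ H₂ : KG N Rel)
    (hGV : G.V.Finite) (hGR : G.R.Finite) (hGE : G.E.Finite)
    (h1core : IsRPCore H₁) (h2core : IsRPCore H₂)
    (hGtoH1 : ∃ π φ, IsRelPresHom G H₁ π φ)
    (hH1toG : ∃ π φ, IsRelPresHom H₁ G π φ)
    (hGtoH2 : ∃ π φ, IsRelPresHom G H₂ π φ)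
    (hH2toG : ∃ π φ, IsRelPresHom H₂ G π φ) :
    IsIso H₁ H₂ :=
  rpCore_unique_general G H₁ H₂ hGV hGR h1core h2core hGtoH1 hH1toG hGtoH2 hH2toG
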